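/- arXiv:1510.07055 — 2 statements merged into one kernel-verified Lean document; each statement's English description precedes it below -/
import Mathlib

section
/- Let k ≥ 1 be an integer. For each j ∈ {1,…,k} let M_{1,j}, M_{2,j} be positive real numbers satisfying the constraint M_{1,j} + M_{2,j} = (M_{1,j}·M_{2,j})/(4π), and let m_{1,j}, m_{2,j} be real numbers with m_{i,j} ≥ M_{i,j} for i = 1,2 and with Σ_{j=1}^{k} m_{1,j} = 8kπ and Σ_{j=1}^{k} m_{2,j} = 8kπ. Then M_{i,j} = m_{i,j} = 8π for all i ∈ {1,2} and all j ∈ {1,…,k}. -/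
/-!
Each bubble's limiting masses lie on the hyperbola `a + b = ab/(4π)`, on which AM-GM gives
`(a + b)² ≥ 4ab = 16π(a + b)`, i.e. `a + b ≥ 16π`, with equality only at `a = b = 8π`. Hence every
bubble carries local mass `m₀ⱼ + m₁ⱼ ≥ 16π`, while the total is `16kπ`: all these inequalities are
equalities.
-/

namespace PohozaevHyperbola

variable {a b c : ℝ}

theorem mul_eq_mul_add (hc : 0 < c) (h : a + b = a * b / c) : a * b = c * (a + b) := by
  rw [h]
  field_simp

theorem four_mul_le_add (ha : 0 < a) (hb : 0 < b) (hc : 0 < c) (h : a + b = a * b / c) :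
    4 * c ≤ a + b := by
  have hab := mul_eq_mul_add hc h
  have hamgm : 4 * (a * b) ≤ (a + b) ^ 2 := by nlinarith [sq_nonneg (a - b)]
  nlinarith

theorem eq_two_mul_of_add_eq (hc : 0 < c) (h : a + b = a * b / c) (hsum : a + b = 4 * c) :
    a = 2 * c ∧ b = 2 * c := by
  have hab := mul_eq_mul_add hc h
  have hdiff : (a - b) ^ 2 = 0 := by nlinarith
  have hab_eq : a - b = 0 := pow_eq_zero_iff two_ne_zero |>.mp hdiff
  constructor <;> linarith

end PohozaevHyperbola

open PohozaevHyperbola in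
theorem all_masses_eq_eight_pi_general (k : ℕ)
    (M m : Fin 2 → Fin k → ℝ)
    (hMpos : ∀ i j, 0 < M i j)
    (hconstraint : ∀ j, M 0 j + M 1 j = M 0 j * M 1 j / (4 * Real.pi))
    (hdom : ∀ i j, M i j ≤ m i j)
    (hsum : ∀ i, ∑ j : Fin k, m i j = 8 * k * Real.pi) :
    ∀ i j, M i j = 8 * Real.pi ∧ m i j = 8 * Real.pi := by
  have h4π : 0 < 4 * Real.pi := by positivity
  have hlimit (j) : 16 * Real.pi ≤ M 0 j + M 1 j := by
    linarith [four_mul_le_add (hMpos 0 j) (hMpos 1 j) h4π (hconstraint j)]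
  have hlocal (j) : 16 * Real.pi ≤ m 0 j + m 1 j := by
    linarith [hlimit j, hdom 0 j, hdom 1 j]
  have htotal : ∑ _j : Fin k, 16 * Real.pi = ∑ j, (m 0 j + m 1 j) := by
    rw [Finset.sum_add_distrib, hsum 0, hsum 1, Finset.sum_const, Finset.card_univ,
      Fintype.card_fin, nsmul_eq_mul]
    ring
  have hbubble (j) : m 0 j + m 1 j = 16 * Real.pi :=
    ((Finset.sum_eq_sum_iff_of_le fun j _ ↦ hlocal j).mp htotal j (Finset.mem_univ j)).symm
  intro i j
  have hM : M 0 j + M 1 j = 4 * (4 * Real.pi) := by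
    linarith [hlimit j, hdom 0 j, hdom 1 j, hbubble j]
  obtain ⟨hM0, hM1⟩ := eq_two_mul_of_add_eq h4π (hconstraint j) hM
  have hm0 : m 0 j = M 0 j := by linarith [hdom 0 j, hdom 1 j, hbubble j]
  have hm1 : m 1 j = M 1 j := by linarith [hdom 0 j, hdom 1 j, hbubble j]
  revert i
  rw [Fin.forall_fin_two, hm0, hm1, hM0, hM1]
  constructor <;> constructor <;> ring

/-- Arithmetic core of the lemma that all local masses equal `8π`: if for each
`j` the limiting masses `M i j > 0` satisfy the Pohozaev constraint
`M₀ⱼ + M₁ⱼ = M₀ⱼ·M₁ⱼ/(4π)`, the local masses dominate (`m i j ≥ M i j`), and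
`Σⱼ m i j = 8kπ` for `i = 1, 2`, then `M i j = m i j = 8π` for all `i, j`. -/
theorem all_masses_eq_eight_pi (k : ℕ) (hk : 1 ≤ k)
    (M m : Fin 2 → Fin k → ℝ)
    (hMpos : ∀ i j, 0 < M i j)
    (hconstraint : ∀ j, M 0 j + M 1 j = M 0 j * M 1 j / (4 * Real.pi))
    (hdom : ∀ i j, M i j ≤ m i j)
    (hsum : ∀ i, ∑ j : Fin k, m i j = 8 * k * Real.pi) :
    ∀ i j, M i j = 8 * Real.pi ∧ m i j = 8 * Real.pi :=
  all_masses_eq_eight_pi_general k M m hMpos hconstraint hdom hsum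
end

section
/- Let k ≥ 1 be an integer and C₀ > 4π a real number. For each j ∈ {1,…,k} let M_{1,j}, M_{2,j} be positive real numbers satisfying M_{1,j} + M_{2,j} = (M_{1,j}·M_{2,j})/(4π) and M_{i,j} ≤ C₀ for i = 1,2. Set E = Σ_{i=1}^{2} Σ_{j=1}^{k} (M_{i,j} − 8π). Then E = (1/2)·Σ_{i=1}^{2} Σ_{j=1}^{k} (M_{i,j} − 8π)²/(M_{i,j} − 4π), in particular E ≥ 0, and for every pair (i₀, j₀), (M_{i₀,j₀} − 8π)² ≤ 2(C₀ − 4π)·E. -/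
/-!
With `c = 4π`, the Pohozaev constraint `a + b = ab/c` reads `(a - c)(b - c) = c²`, so for positive
masses both `a` and `b` exceed `c`, and `(a - 2c)²/(a - c) = (a - 2c) + (b - 2c)`: each of the two
quotients of a pair equals the excess of the whole pair. Summing gives the identity, so the total
excess `E` is a sum of nonnegative terms, and a single term
`(M - 2c)² = (M - 2c)²/(M - c) · (M - c)` is at most `2E · (C₀ - c)`.
-/

open Finset

theorem sub_mul_sub_eq_sq_of_add_eq_mul_div {a b c : ℝ} (hc : c ≠ 0) (h : a + b = a * b / c) :
    (a - c) * (b - c) = c ^ 2 := by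
  rw [eq_div_iff hc] at h
  linear_combination -h

theorem lt_of_sub_mul_sub_eq_sq {a b c : ℝ} (ha : 0 < a) (hb : 0 < b) (hc : 0 < c)
    (h : (a - c) * (b - c) = c ^ 2) : c < a := by
  by_contra! hac
  nlinarith [mul_le_mul_of_nonneg_right hac hb.le, mul_pos hc ha]

theorem sq_sub_two_mul_div_sub_eq {a b c : ℝ} (hc : c ≠ 0) (h : (a - c) * (b - c) = c ^ 2) :
    (a - 2 * c) ^ 2 / (a - c) = (a - 2 * c) + (b - 2 * c) := by
  have hac : a - c ≠ 0 := by
    rintro hac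
    rw [hac, zero_mul] at h
    exact pow_ne_zero 2 hc h.symm
  rw [div_eq_iff hac]
  linear_combination -h

section MassExcess

variable {ι : Type*} [Fintype ι] {c : ℝ} {M : Fin 2 → ι → ℝ}

theorem sum_sub_two_mul_eq_half_sum_sq_div (hc : c ≠ 0)
    (h : ∀ j, (M 0 j - c) * (M 1 j - c) = c ^ 2) :
    ∑ i, ∑ j, (M i j - 2 * c) = 1 / 2 * ∑ i, ∑ j, (M i j - 2 * c) ^ 2 / (M i j - c) := by
  rw [Fin.sum_univ_two, Fin.sum_univ_two, ← sum_add_distrib, ← sum_add_distrib, mul_sum]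
  refine sum_congr rfl fun j _ => ?_
  rw [sq_sub_two_mul_div_sub_eq hc (h j),
    sq_sub_two_mul_div_sub_eq hc (by rw [mul_comm]; exact h j)]
  ring

end MassExcess

section HalfSum

variable {α β : Type*} [Fintype α] [Fintype β] {x d : α → β → ℝ} {E : ℝ}

theorem nonneg_of_eq_half_sum_sq_div (hd : ∀ i j, 0 < d i j)
    (hE : E = 1 / 2 * ∑ i, ∑ j, x i j ^ 2 / d i j) : 0 ≤ E :=
  hE ▸ mul_nonneg (by norm_num) (sum_nonneg fun i _ => sum_nonneg fun j _ =>
    div_nonneg (sq_nonneg _) (hd i j).le)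

theorem sq_le_two_mul_of_eq_half_sum_sq_div {D : ℝ} (hd : ∀ i j, 0 < d i j)
    (hD : ∀ i j, d i j ≤ D) (hE : E = 1 / 2 * ∑ i, ∑ j, x i j ^ 2 / d i j) (i : α) (j : β) :
    x i j ^ 2 ≤ 2 * D * E := by
  have hq : ∀ i j, 0 ≤ x i j ^ 2 / d i j := fun i j => div_nonneg (sq_nonneg _) (hd i j).le
  have hle : x i j ^ 2 / d i j ≤ ∑ i, ∑ j, x i j ^ 2 / d i j :=
    (single_le_sum (fun j _ => hq i j) (mem_univ j)).trans
      (single_le_sum (fun i _ => sum_nonneg fun j _ => hq i j) (mem_univ i))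
  calc x i j ^ 2 = x i j ^ 2 / d i j * d i j := (div_mul_cancel₀ _ (hd i j).ne').symm
    _ ≤ (∑ i, ∑ j, x i j ^ 2 / d i j) * D :=
      mul_le_mul hle (hD i j) (hd i j).le ((hq i j).trans hle)
    _ = 2 * D * E := by rw [hE]; ring

end HalfSum

theorem mass_excess_identity_general (k : ℕ) (C₀ : ℝ)
    (M : Fin 2 → Fin k → ℝ)
    (hMpos : ∀ i j, 0 < M i j)
    (hconstraint : ∀ j, M 0 j + M 1 j = M 0 j * M 1 j / (4 * Real.pi))
    (hupper : ∀ i j, M i j ≤ C₀) :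
    (∑ i : Fin 2, ∑ j : Fin k, (M i j - 8 * Real.pi))
        = (1 / 2) * ∑ i : Fin 2, ∑ j : Fin k,
            (M i j - 8 * Real.pi) ^ 2 / (M i j - 4 * Real.pi) ∧
    0 ≤ ∑ i : Fin 2, ∑ j : Fin k, (M i j - 8 * Real.pi) ∧
    ∀ i₀ j₀, (M i₀ j₀ - 8 * Real.pi) ^ 2
        ≤ 2 * (C₀ - 4 * Real.pi) *
            ∑ i : Fin 2, ∑ j : Fin k, (M i j - 8 * Real.pi) := by
  have hc : 0 < 4 * Real.pi := by positivity
  have hpair j := sub_mul_sub_eq_sq_of_add_eq_mul_div hc.ne' (hconstraint j)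
  have hgt : ∀ i j, 4 * Real.pi < M i j := fun i j => by
    fin_cases i
    · exact lt_of_sub_mul_sub_eq_sq (hMpos 0 j) (hMpos 1 j) hc (hpair j)
    · exact lt_of_sub_mul_sub_eq_sq (hMpos 1 j) (hMpos 0 j) hc
        ((mul_comm _ _).trans (hpair j))
  have hd i j : 0 < M i j - 4 * Real.pi := sub_pos.2 (hgt i j)
  have hD i j : M i j - 4 * Real.pi ≤ C₀ - 4 * Real.pi := sub_le_sub_right (hupper i j) _
  rw [show 8 * Real.pi = 2 * (4 * Real.pi) by ring]
  have hE := sum_sub_two_mul_eq_half_sum_sq_div hc.ne' hpair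
  exact ⟨hE, nonneg_of_eq_half_sum_sq_div hd hE, sq_le_two_mul_of_eq_half_sum_sq_div hd hD hE⟩

/-- Quantitative mass comparison: if each pair `(M 0 j, M 1 j)` of positive
reals satisfies the Pohozaev constraint `M₀ⱼ + M₁ⱼ = M₀ⱼ·M₁ⱼ/(4π)` and
`M i j ≤ C₀` with `C₀ > 4π`, then the total excess mass
`E = Σᵢ Σⱼ (M i j − 8π)` satisfies
`E = ½ Σᵢ Σⱼ (M i j − 8π)²/(M i j − 4π)`, in particular `E ≥ 0`, and each
`(M i₀ j₀ − 8π)² ≤ 2(C₀ − 4π)·E`. -/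
theorem mass_excess_identity (k : ℕ) (hk : 1 ≤ k) (C₀ : ℝ)
    (hC₀ : 4 * Real.pi < C₀)
    (M : Fin 2 → Fin k → ℝ)
    (hMpos : ∀ i j, 0 < M i j)
    (hconstraint : ∀ j, M 0 j + M 1 j = M 0 j * M 1 j / (4 * Real.pi))
    (hupper : ∀ i j, M i j ≤ C₀) :
    (∑ i : Fin 2, ∑ j : Fin k, (M i j - 8 * Real.pi))
        = (1 / 2) * ∑ i : Fin 2, ∑ j : Fin k,
            (M i j - 8 * Real.pi) ^ 2 / (M i j - 4 * Real.pi) ∧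
    0 ≤ ∑ i : Fin 2, ∑ j : Fin k, (M i j - 8 * Real.pi) ∧
    ∀ i₀ j₀, (M i₀ j₀ - 8 * Real.pi) ^ 2
        ≤ 2 * (C₀ - 4 * Real.pi) *
            ∑ i : Fin 2, ∑ j : Fin k, (M i j - 8 * Real.pi) :=
  mass_excess_identity_general k C₀ M hMpos hconstraint hupper
end
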